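/- arXiv:1104.0102 — 2 statements merged into one kernel-verified Lean document; each statement's English description precedes it below -/
import Mathlib

section
/- Define E^k(x,y) = dim Ext^k(M(x·λ₀), M(y·λ₀)) for parabolic Verma modules in the principal block of the parabolic category O for the Hermitian symmetric pair (sl_{N+1}, (gl_N ⊕ gl_1) ∩ sl_{N+1}), indexing weights by (j) = λ₀·s_1⋯s_j for 0 ≤ j ≤ N. Then: E^k((j),(j)) = 1 if k = 0 and 0 otherwise; E^k((j),(j−1)) = 1 if k ∈ {0,1} and 0 otherwise; and for l < j−1, E^k((j),(l)) = 1 if k ∈ {j−l−1, j−l} and 0 otherwise. -/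
/-! Along the chain `(0) < (1) < ⋯ < (N)` the recursion moves `j` down by one and shifts the
degree `k` by one, until it reaches the subdiagonal `l = j - 1`, where
`E^k((j),(j-1)) = δ_{k-1,0} + δ_{k,0}`. Hence `E^k((j),(l))` is the subdiagonal value at
degree `k - (j - l - 1)`. -/

section SheltonChain

variable {E : ℤ → ℕ → ℕ → ℕ}

theorem shelton_subdiag (hdiag : ∀ (kk : ℤ) (j : ℕ), E kk j j = if kk = 0 then 1 else 0)
    (hrec1 : ∀ (kk : ℤ) (j : ℕ), 1 ≤ j →
      E kk j (j - 1) = E (kk - 1) (j - 1) (j - 1) + E kk (j - 1) (j - 1))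
    (kk : ℤ) {j : ℕ} (hj : 1 ≤ j) :
    E kk j (j - 1) = if kk = 0 ∨ kk = 1 then 1 else 0 := by
  rw [hrec1 kk j hj, hdiag, hdiag]
  by_cases h0 : kk = 0
  · simp [h0]
  by_cases h1 : kk = 1
  · simp [h1]
  · have : kk - 1 ≠ 0 := by omega
    simp [h0, h1, this]

theorem shelton_far (hsub : ∀ (kk : ℤ) (j : ℕ), 1 ≤ j →
      E kk j (j - 1) = if kk = 0 ∨ kk = 1 then 1 else 0)
    (hrec2 : ∀ (kk : ℤ) (j l : ℕ), l + 1 < j → E kk j l = E (kk - 1) (j - 1) l)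
    {l j : ℕ} (hlj : l + 2 ≤ j) (kk : ℤ) :
    E kk j l = if kk = (j : ℤ) - (l : ℤ) - 1 ∨ kk = (j : ℤ) - (l : ℤ) then 1 else 0 := by
  induction j, hlj using Nat.le_induction generalizing kk with
  | base =>
    have h := hsub (kk - 1) (l + 1) (by omega)
    rw [Nat.add_sub_cancel] at h
    rw [hrec2 kk (l + 2) l (by omega), show l + 2 - 1 = l + 1 from rfl, h]
    push_cast
    split_ifs <;> omega
  | succ j hlj ih =>
    rw [hrec2 kk (j + 1) l (by omega), Nat.add_sub_cancel, ih (kk - 1)]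
    push_cast
    split_ifs <;> omega

end SheltonChain

theorem stmt9_general (E : ℤ → ℕ → ℕ → ℕ)
    (hdiag : ∀ (kk : ℤ) (j : ℕ), E kk j j = if kk = 0 then 1 else 0)
    (hrec1 : ∀ (kk : ℤ) (j : ℕ), 1 ≤ j →
      E kk j (j - 1) = E (kk - 1) (j - 1) (j - 1) + E kk (j - 1) (j - 1))
    (hrec2 : ∀ (kk : ℤ) (j l : ℕ), l + 1 < j → E kk j l = E (kk - 1) (j - 1) l) :
    (∀ (kk : ℤ) (j : ℕ), E kk j j = if kk = 0 then 1 else 0) ∧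
    (∀ (kk : ℤ) (j : ℕ), 1 ≤ j → E kk j (j - 1) = if kk = 0 ∨ kk = 1 then 1 else 0) ∧
    (∀ (kk : ℤ) (j l : ℕ), l + 1 < j →
      E kk j l = if kk = (j : ℤ) - (l : ℤ) - 1 ∨ kk = (j : ℤ) - (l : ℤ) then 1 else 0) := by
  have hsub := fun kk j (hj : 1 ≤ j) => shelton_subdiag hdiag hrec1 kk hj
  exact ⟨hdiag, hsub, fun kk j l hlj => shelton_far hsub hrec2 hlj kk⟩

/-- Shelton's dimension formulas for the pair
`(sl_{N+1}, (gl_N ⊕ gl_1) ∩ sl_{N+1})`.  Write `E k j l` for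
`dim Ext^k(M((j)·λ₀), M((l)·λ₀))` with `(j) = λ₀·s_1⋯s_j`.  The hypotheses are Shelton's
recursion formulas specialized to this chain:  `E^k(x,x) = δ_{k,0}`, `E^k(x,y) = 0` unless
`y < x` along the chain, `E^k((j),(j-1)) = E^{k-1}((j-1),(j-1)) + E^k((j-1),(j-1))` and,
for `l < j-1`, `E^k((j),(l)) = E^{k-1}((j-1),(l))`.  Then `E^k((j),(j)) = δ_{k,0}`,
`E^k((j),(j-1)) = 1` iff `k ∈ {0,1}` and `0` otherwise, and for `l < j-1`,
`E^k((j),(l)) = 1` iff `k ∈ {j-l-1, j-l}` and `0` otherwise. -/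
theorem stmt9 (E : ℤ → ℕ → ℕ → ℕ)
    (hneg : ∀ kk : ℤ, kk < 0 → ∀ j l, E kk j l = 0)
    (hdiag : ∀ (kk : ℤ) (j : ℕ), E kk j j = if kk = 0 then 1 else 0)
    (hvanish : ∀ (kk : ℤ) (j l : ℕ), j < l → E kk j l = 0)
    (hrec1 : ∀ (kk : ℤ) (j : ℕ), 1 ≤ j →
      E kk j (j - 1) = E (kk - 1) (j - 1) (j - 1) + E kk (j - 1) (j - 1))
    (hrec2 : ∀ (kk : ℤ) (j l : ℕ), l + 1 < j → E kk j l = E (kk - 1) (j - 1) l) :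
    (∀ (kk : ℤ) (j : ℕ), E kk j j = if kk = 0 then 1 else 0) ∧
    (∀ (kk : ℤ) (j : ℕ), 1 ≤ j → E kk j (j - 1) = if kk = 0 ∨ kk = 1 then 1 else 0) ∧
    (∀ (kk : ℤ) (j l : ℕ), l + 1 < j →
      E kk j l = if kk = (j : ℤ) - (l : ℤ) - 1 ∨ kk = (j : ℤ) - (l : ℤ) then 1 else 0) :=
  stmt9_general E hdiag hrec1 hrec2
end

section
/- In the setting of Merkulov's construction above, if Q(λ_3(a_1,a_2,a_3)) = 0 and Q(a_1·a_2)·Q(a_3·a_4) = 0 for all a_1, a_2, a_3, a_4 ∈ A, then λ_n = 0 for all n ≥ 4 (hence m_n = Π∘λ_n = 0 for all n ≥ 4). -/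
/-- `Qλ`, with the convention `Qλ₁ = -id` (Merkulov). -/
def QlamAux {A : Type} [Ring A] (Q : A → A) (lam : ∀ N : ℕ, (Fin N → A) → A) :
    ∀ N : ℕ, (Fin N → A) → A :=
  fun N v => if h : N = 1 then -(v ⟨0, by omega⟩) else Q (lam N v)

/-!
In the recursion for `λ_n` every summand is a product `Qλ_k · Qλ_l` with `k + l = n`.
For `n ≥ 4` one of `k, l` is at least `3`, and then that factor vanishes: `Qλ_3 = 0` by
hypothesis and `λ_m = 0` for `4 ≤ m < n` by induction. The only exception is `n = 4`,
`k = l = 2`, where the summand is `Q(a₁a₂) · Q(a₃a₄) = 0`.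
-/

section QlamAux

variable {A : Type} [Ring A] (Q : A → A) (lam : ∀ N : ℕ, (Fin N → A) → A)

theorem QlamAux_of_ne_one {N : ℕ} (hN : N ≠ 1) (v : Fin N → A) :
    QlamAux Q lam N v = Q (lam N v) :=
  dif_neg hN

theorem QlamAux_two (hlam2 : ∀ v : Fin 2 → A, lam 2 v = v 0 * v 1) (v : Fin 2 → A) :
    QlamAux Q lam 2 v = Q (v 0 * v 1) := by
  rw [QlamAux_of_ne_one Q lam (by decide), hlam2]

end QlamAux

theorem dite_mem_of_forall_mem {k A ι : Type} [Semiring k] [AddCommMonoid A] [Module k A]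
    [Zero ι] (𝒜 : ι → Submodule k A) {N : ℕ} {a : Fin N → A} {da : Fin N → ι}
    (ha : ∀ i, a i ∈ 𝒜 (da i)) (i : ℕ) :
    (if h : i < N then a ⟨i, h⟩ else 0) ∈ 𝒜 (if h : i < N then da ⟨i, h⟩ else 0) := by
  split_ifs
  · exact ha _
  · exact zero_mem _

section Merkulov

variable {k A : Type} [Field k] [Ring A] [Algebra k A]

def MerkulovRecursion (𝒜 : ℤ → Submodule k A) (Q : A →ₗ[k] A)
    (lam : ∀ N : ℕ, (Fin N → A) → A) : Prop :=
  ∀ N, 3 ≤ N → ∀ (a : Fin N → A) (da : Fin N → ℤ),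
    (∀ i, a i ∈ 𝒜 (da i)) →
    lam N a = - ∑ j ∈ Finset.Ioo 0 N,
      ((-1 : k) ^ ((j : ℤ) + ((N : ℤ) - (j : ℤ) - 1) *
          ∑ i ∈ Finset.range j, (if h : i < N then da ⟨i, h⟩ else 0)))
        • (QlamAux (⇑Q) lam j (fun t => if h : (t : ℕ) < N then a ⟨t, h⟩ else 0) *
           QlamAux (⇑Q) lam (N - j) (fun t => if h : j + (t : ℕ) < N then a ⟨j + t, h⟩ else 0))

variable {𝒜 : ℤ → Submodule k A} {Q : A →ₗ[k] A} {lam : ∀ N : ℕ, (Fin N → A) → A}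

theorem lam_eq_zero_of_QlamAux_eq_zero
    (hlam2 : ∀ v : Fin 2 → A, lam 2 v = v 0 * v 1)
    (hlamrec : MerkulovRecursion 𝒜 Q lam)
    (hQQ : ∀ a1 a2 a3 a4 : A, Q (a1 * a2) * Q (a3 * a4) = 0)
    {N : ℕ} (hN : 4 ≤ N)
    (hQlam : ∀ m, 3 ≤ m → m < N → ∀ (v : Fin m → A) (dv : Fin m → ℤ),
      (∀ i, v i ∈ 𝒜 (dv i)) → QlamAux (⇑Q) lam m v = 0)
    {a : Fin N → A} {da : Fin N → ℤ} (ha : ∀ i, a i ∈ 𝒜 (da i)) :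
    lam N a = 0 := by
  rw [hlamrec N (by omega) a da ha, neg_eq_zero]
  refine Finset.sum_eq_zero fun j hj => ?_
  rw [Finset.mem_Ioo] at hj
  rcases le_or_gt 3 j with hj3 | hj3
  · rw [hQlam j hj3 hj.2 _ _ fun t => dite_mem_of_forall_mem 𝒜 ha t, zero_mul, smul_zero]
  rcases le_or_gt 3 (N - j) with hNj3 | hNj3
  · rw [hQlam (N - j) hNj3 (by omega) _ _ fun t => dite_mem_of_forall_mem 𝒜 ha (j + t),
      mul_zero, smul_zero]
  obtain ⟨rfl, rfl⟩ : j = 2 ∧ N = 4 := by omega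
  rw [QlamAux_two _ _ hlam2, QlamAux_two _ _ hlam2, hQQ, smul_zero]

theorem lam_eq_zero
    (hlam2 : ∀ v : Fin 2 → A, lam 2 v = v 0 * v 1)
    (hlamrec : MerkulovRecursion 𝒜 Q lam)
    (hQlam3 : ∀ (a : Fin 3 → A) (da : Fin 3 → ℤ), (∀ i, a i ∈ 𝒜 (da i)) → Q (lam 3 a) = 0)
    (hQQ : ∀ a1 a2 a3 a4 : A, Q (a1 * a2) * Q (a3 * a4) = 0) :
    ∀ N, 4 ≤ N → ∀ (a : Fin N → A) (da : Fin N → ℤ),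
      (∀ i, a i ∈ 𝒜 (da i)) → lam N a = 0 := by
  intro N
  induction N using Nat.strong_induction_on with
  | _ N ih =>
    intro hN a da ha
    refine lam_eq_zero_of_QlamAux_eq_zero hlam2 hlamrec hQQ hN (fun m hm hmN v dv hv => ?_) ha
    rw [QlamAux_of_ne_one _ _ (by omega)]
    obtain rfl | hm4 := eq_or_lt_of_le hm
    · exact hQlam3 v dv hv
    · rw [ih m hmN hm4 v dv hv, map_zero]

end Merkulov

theorem stmt14_general {k A : Type} [Field k] [Ring A] [Algebra k A]
    (𝒜 : ℤ → Submodule k A)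
    (Q Pi : A →ₗ[k] A)
    (lam : ∀ N : ℕ, (Fin N → A) → A)
    (hlam2 : ∀ v : Fin 2 → A, lam 2 v = v 0 * v 1)
    (hlamrec : ∀ N, 3 ≤ N → ∀ (a : Fin N → A) (da : Fin N → ℤ),
      (∀ i, a i ∈ 𝒜 (da i)) →
      lam N a = - ∑ j ∈ Finset.Ioo 0 N,
        ((-1 : k) ^ ((j : ℤ) + ((N : ℤ) - (j : ℤ) - 1) *
            ∑ i ∈ Finset.range j, (if h : i < N then da ⟨i, h⟩ else 0)))
          • (QlamAux (⇑Q) lam j (fun t => if h : (t : ℕ) < N then a ⟨t, h⟩ else 0) *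
             QlamAux (⇑Q) lam (N - j) (fun t => if h : j + (t : ℕ) < N then a ⟨j + t, h⟩ else 0)))
    (hQlam3 : ∀ (a : Fin 3 → A) (da : Fin 3 → ℤ), (∀ i, a i ∈ 𝒜 (da i)) → Q (lam 3 a) = 0)
    (hQQ : ∀ a1 a2 a3 a4 : A, Q (a1 * a2) * Q (a3 * a4) = 0) :
    ∀ N, 4 ≤ N → ∀ (a : Fin N → A) (da : Fin N → ℤ),
      (∀ i, a i ∈ 𝒜 (da i)) → lam N a = 0 ∧ Pi (lam N a) = 0 := by
  intro N hN a da ha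
  have hlam : lam N a = 0 := lam_eq_zero hlam2 hlamrec hQlam3 hQQ N hN a da ha
  exact ⟨hlam, by rw [hlam, map_zero]⟩

/-- Merkulov's construction; second vanishing criterion.  In the
setting of Merkulov's construction — a dg-algebra `(A, d)` with grading `𝒜`, projection
`Π` onto a subspace `B`, homotopy `Q` with `1 - Π = dQ + Qd`, and maps `λ_n` defined by
`λ₂(a₁,a₂) = a₁·a₂` and the recursion
`λ_n = -Σ_{k+l=n} (-1)^{k+(l-1)(|a₁|+⋯+|a_k|)} Q(λ_k)·Q(λ_l)` (with `Qλ₁ = -id`) —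
if `Q(λ₃(a₁,a₂,a₃)) = 0` and `Q(a₁·a₂)·Q(a₃·a₄) = 0` for all `aᵢ ∈ A`, then `λ_n = 0`
for all `n ≥ 4` (hence `m_n = Π ∘ λ_n = 0` for all `n ≥ 4`). -/
theorem stmt14 {k A : Type} [Field k] [Ring A] [Algebra k A]
    (𝒜 : ℤ → Submodule k A)
    (d Q Pi : A →ₗ[k] A) (Bsub : Submodule k A)
    (hd2 : ∀ x, d (d x) = 0)
    (hgradedMul : ∀ i j x y, x ∈ 𝒜 i → y ∈ 𝒜 j → x * y ∈ 𝒜 (i + j))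
    (hddeg : ∀ (i : ℤ) (x), x ∈ 𝒜 i → d x ∈ 𝒜 (i + 1))
    (hQdeg : ∀ (i : ℤ) (x), x ∈ 𝒜 i → Q x ∈ 𝒜 (i - 1))
    (hPiB : ∀ x, Pi x ∈ Bsub)
    (hPiproj : ∀ x ∈ Bsub, Pi x = x)
    (hPid : ∀ x, Pi (d x) = d (Pi x))
    (hhtpy : ∀ x : A, x - Pi x = d (Q x) + Q (d x))
    (lam : ∀ N : ℕ, (Fin N → A) → A)
    (hlam2 : ∀ v : Fin 2 → A, lam 2 v = v 0 * v 1)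
    (hlamrec : ∀ N, 3 ≤ N → ∀ (a : Fin N → A) (da : Fin N → ℤ),
      (∀ i, a i ∈ 𝒜 (da i)) →
      lam N a = - ∑ j ∈ Finset.Ioo 0 N,
        ((-1 : k) ^ ((j : ℤ) + ((N : ℤ) - (j : ℤ) - 1) *
            ∑ i ∈ Finset.range j, (if h : i < N then da ⟨i, h⟩ else 0)))
          • (QlamAux (⇑Q) lam j (fun t => if h : (t : ℕ) < N then a ⟨t, h⟩ else 0) *
             QlamAux (⇑Q) lam (N - j) (fun t => if h : j + (t : ℕ) < N then a ⟨j + t, h⟩ else 0)))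
    (hQlam3 : ∀ (a : Fin 3 → A) (da : Fin 3 → ℤ), (∀ i, a i ∈ 𝒜 (da i)) → Q (lam 3 a) = 0)
    (hQQ : ∀ a1 a2 a3 a4 : A, Q (a1 * a2) * Q (a3 * a4) = 0) :
    ∀ N, 4 ≤ N → ∀ (a : Fin N → A) (da : Fin N → ℤ),
      (∀ i, a i ∈ 𝒜 (da i)) → lam N a = 0 ∧ Pi (lam N a) = 0 :=
  stmt14_general 𝒜 Q Pi lam hlam2 hlamrec hQlam3 hQQ
end
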